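/- arXiv:2210.06760 — 3 statements merged into one kernel-verified Lean document; each statement's English description precedes it below -/
import Mathlib

section
/- Let d ≥ 2 be an integer, s ∈ (0,1), p ≥ 1. For r ∈ (0,1) define Φ(r) = |S^{d-2}| · ∫_{-1}^{1} (1-t²)^{(d-3)/2} / (1 - 2tr + r²)^{(d+sp)/2} dt. Then the function r ↦ (1-r)^{sp+1}·Φ(r) is bounded on (0,1). -/
/-!
Put `a = (1 - r)²`, `β = (d - 3)/2`, `α = (d + sp)/2` and `κ = α - β - 1 = (sp + 1)/2 > 0`.
Since `1 - 2tr + r² ≥ (a + (1 - t))/4`, the integrand is at most a constant times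
`(1 + t)^β + (1 - t)^β (a + 1 - t)^{-α}`. The first term is integrable; in the second put
`u = 1 - t` and split `∫₀² u^β (a + u)^{-α} du` at `u = a`, bounding `(a + u)^{-α}` by
`a^{-α}` below and by `u^{-α}` above: both pieces are `O(a^{-κ})`, and `(1 - r)^{sp+1} = a^κ`.
-/

open Real Set MeasureTheory

lemma rpow_le_max_one_rpow {x y β : ℝ} (hx : 1 ≤ x) (hxy : x ≤ y) :
    x ^ β ≤ max 1 (y ^ β) := by
  rcases le_total 0 β with hβ | hβ
  · exact (rpow_le_rpow (by linarith) hxy hβ).trans (le_max_right _ _)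
  · exact (rpow_le_one_of_one_le_of_nonpos hx hβ).trans (le_max_left _ _)

lemma intervalIntegrable_rpow_div_add_rpow {a b β α : ℝ} (ha : 0 < a) (hb : 0 ≤ b)
    (hβ : -1 < β) :
    IntervalIntegrable (fun u => u ^ β / (a + u) ^ α) volume 0 b := by
  simp only [div_eq_mul_inv]
  refine (intervalIntegral.intervalIntegrable_rpow' hβ).mul_continuousOn ?_
  rw [uIcc_of_le hb]
  refine ContinuousOn.inv₀ (ContinuousOn.rpow_const (by fun_prop) fun u hu => ?_) fun u hu => ?_
  · exact Or.inl (by linarith [hu.1])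
  · exact (rpow_pos_of_pos (by linarith [hu.1]) α).ne'

lemma intervalIntegral_rpow_div_add_rpow_le {a b β κ : ℝ} (ha : 0 < a) (hab : a ≤ b)
    (hβ : -1 < β) (hκ : 0 < κ) :
    ∫ u in (0 : ℝ)..b, u ^ β / (a + u) ^ (β + 1 + κ)
      ≤ (1 / (β + 1) + 1 / κ) * a ^ (-κ) := by
  set α := β + 1 + κ
  have hα : 0 ≤ α := by linarith
  have hint₁ := intervalIntegrable_rpow_div_add_rpow (α := α) ha ha.le hβ
  have hint₂ : IntervalIntegrable (fun u => u ^ β / (a + u) ^ α) volume a b := by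
    refine (intervalIntegrable_rpow_div_add_rpow ha (ha.le.trans hab) hβ).mono_set ?_
    rw [uIcc_of_le hab, uIcc_of_le (ha.le.trans hab)]
    exact Icc_subset_Icc_left ha.le
  have h₁ : ∫ u in (0 : ℝ)..a, u ^ β / (a + u) ^ α ≤ a ^ (-κ) / (β + 1) := by
    calc ∫ u in (0 : ℝ)..a, u ^ β / (a + u) ^ α
        ≤ ∫ u in (0 : ℝ)..a, u ^ β / a ^ α := by
          refine intervalIntegral.integral_mono_on ha.le hint₁
            ((intervalIntegral.intervalIntegrable_rpow' hβ).div_const _) fun u hu => ?_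
          exact div_le_div_of_nonneg_left (rpow_nonneg hu.1 _) (rpow_pos_of_pos ha _)
            (rpow_le_rpow ha.le (by linarith [hu.1]) hα)
      _ = a ^ (-κ) / (β + 1) := by
          rw [intervalIntegral.integral_div, integral_rpow (Or.inl hβ),
            zero_rpow (by linarith), sub_zero, div_right_comm, ← rpow_sub ha]
          congr 2; ring
  have h₂ : ∫ u in a..b, u ^ β / (a + u) ^ α ≤ a ^ (-κ) / κ := by
    have hpos : ∀ u ∈ Icc a b, 0 < u := fun u hu => ha.trans_le hu.1
    have h0 : (0 : ℝ) ∉ uIcc a b := by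
      rw [uIcc_of_le hab]; exact fun h => (hpos 0 h).false
    calc ∫ u in a..b, u ^ β / (a + u) ^ α
        ≤ ∫ u in a..b, u ^ (-κ - 1) := by
          refine intervalIntegral.integral_mono_on hab hint₂
            (intervalIntegral.intervalIntegrable_rpow (Or.inr h0)) fun u hu => ?_
          calc u ^ β / (a + u) ^ α ≤ u ^ β / u ^ α :=
                div_le_div_of_nonneg_left (rpow_nonneg (hpos u hu).le _)
                  (rpow_pos_of_pos (hpos u hu) _) (rpow_le_rpow (hpos u hu).le (by linarith) hα)
            _ = u ^ (-κ - 1) := by rw [← rpow_sub (hpos u hu)]; congr 1; ring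
      _ = (a ^ (-κ) - b ^ (-κ)) / κ := by
          rw [integral_rpow (Or.inr ⟨by linarith, h0⟩), sub_add_cancel, div_neg, ← neg_div,
            neg_sub]
      _ ≤ a ^ (-κ) / κ := by
          gcongr; linarith [rpow_nonneg (ha.le.trans hab) (-κ)]
  rw [← intervalIntegral.integral_add_adjacent_intervals hint₁ hint₂]
  calc _ ≤ a ^ (-κ) / (β + 1) + a ^ (-κ) / κ := add_le_add h₁ h₂
    _ = _ := by ring

lemma sq_one_sub_add_one_sub_le {r t : ℝ} (hr : 0 ≤ r) (ht : -1 ≤ t) (ht1 : t ≤ 1) :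
    (1 - r) ^ 2 + (1 - t) ≤ 4 * (1 - 2 * t * r + r ^ 2) := by
  nlinarith [mul_nonneg hr (sub_nonneg.2 ht1)]

lemma one_sub_rpow_mul_one_add_rpow_div_le {t e β α : ℝ} (ht : t ∈ Icc (-1 : ℝ) 1)
    (he : 1 - t ≤ e) (hα : 0 ≤ α) :
    (1 - t) ^ β * (1 + t) ^ β / e ^ α
      ≤ max 1 (2 ^ β) * ((1 + t) ^ β + (1 - t) ^ β / e ^ α) := by
  obtain ⟨ht₀, ht₁⟩ := ht
  have hplus : 0 ≤ (1 + t) ^ β := rpow_nonneg (by linarith) _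
  have hminus : 0 ≤ (1 - t) ^ β / e ^ α :=
    div_nonneg (rpow_nonneg (by linarith) _) (rpow_nonneg (by linarith) _)
  rcases le_total t 0 with ht | ht
  · have he₁ : 1 ≤ e ^ α := one_le_rpow (by linarith) hα
    calc (1 - t) ^ β * (1 + t) ^ β / e ^ α ≤ (1 - t) ^ β * (1 + t) ^ β :=
          div_le_self (mul_nonneg (rpow_nonneg (by linarith) _) hplus) he₁
      _ ≤ max 1 (2 ^ β) * (1 + t) ^ β :=
          mul_le_mul_of_nonneg_right (rpow_le_max_one_rpow (by linarith) (by linarith)) hplus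
      _ ≤ _ := by gcongr; linarith
  · calc (1 - t) ^ β * (1 + t) ^ β / e ^ α = (1 + t) ^ β * ((1 - t) ^ β / e ^ α) := by ring
      _ ≤ max 1 (2 ^ β) * ((1 - t) ^ β / e ^ α) :=
          mul_le_mul_of_nonneg_right (rpow_le_max_one_rpow (by linarith) (by linarith)) hminus
      _ ≤ _ := by gcongr; linarith

lemma one_sub_sq_rpow_div_rpow_le {t r β α : ℝ} (ht : t ∈ Icc (-1 : ℝ) 1) (hr₀ : 0 ≤ r)
    (hr₁ : r < 1) (hα : 0 ≤ α) :
    (1 - t ^ 2) ^ β / (1 - 2 * t * r + r ^ 2) ^ α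
      ≤ 4 ^ α * max 1 (2 ^ β) *
          ((1 + t) ^ β + (1 - t) ^ β / ((1 - r) ^ 2 + (1 - t)) ^ α) := by
  obtain ⟨ht₀, ht₁⟩ := ht
  set e := (1 - r) ^ 2 + (1 - t)
  have he : 0 < e := by positivity [sub_pos.2 hr₁]
  have hnum : (1 - t ^ 2) ^ β = (1 - t) ^ β * (1 + t) ^ β := by
    rw [← mul_rpow (by linarith) (by linarith)]; ring_nf
  calc (1 - t ^ 2) ^ β / (1 - 2 * t * r + r ^ 2) ^ α ≤ (1 - t ^ 2) ^ β / (e / 4) ^ α := by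
        refine div_le_div_of_nonneg_left (rpow_nonneg (by nlinarith) _) (by positivity) ?_
        have := sq_one_sub_add_one_sub_le hr₀ ht₀ ht₁
        exact rpow_le_rpow (by positivity) (by linarith) hα
    _ = 4 ^ α * ((1 - t) ^ β * (1 + t) ^ β / e ^ α) := by
        rw [div_rpow he.le (by norm_num), hnum]; field_simp
    _ ≤ _ := by
        rw [mul_assoc]
        gcongr
        exact one_sub_rpow_mul_one_add_rpow_div_le ⟨ht₀, ht₁⟩ (by nlinarith) hα

lemma intervalIntegrable_one_add_rpow {β : ℝ} (hβ : -1 < β) :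
    IntervalIntegrable (fun t : ℝ => (1 + t) ^ β) volume (-1) 1 := by
  have := (intervalIntegral.intervalIntegrable_rpow' (a := 0) (b := 2) hβ).comp_add_left 1
  norm_num at this
  exact this

lemma integral_one_add_rpow {β : ℝ} (hβ : -1 < β) :
    ∫ t in (-1 : ℝ)..1, (1 + t) ^ β = 2 ^ (β + 1) / (β + 1) := by
  rw [intervalIntegral.integral_comp_add_left (fun x => x ^ β), integral_rpow (Or.inl hβ)]
  norm_num [zero_rpow (show β + 1 ≠ 0 by linarith)]

lemma setIntegral_one_sub_sq_rpow_div_rpow_le {β κ r : ℝ} (hβ : -1 < β) (hκ : 0 < κ)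
    (hr₀ : 0 ≤ r) (hr₁ : r < 1) :
    ∫ t in Ioo (-1 : ℝ) 1, (1 - t ^ 2) ^ β / (1 - 2 * t * r + r ^ 2) ^ (β + 1 + κ)
      ≤ 4 ^ (β + 1 + κ) * max 1 (2 ^ β) * (2 ^ (β + 1) / (β + 1) + 1 / (β + 1) + 1 / κ)
          * ((1 - r) ^ 2) ^ (-κ) := by
  set α := β + 1 + κ
  set a := (1 - r) ^ 2
  have ha₀ : 0 < a := by positivity [sub_pos.2 hr₁]
  have ha₁ : a ≤ 1 := by simp only [a]; nlinarith
  have hpow : 1 ≤ a ^ (-κ) := one_le_rpow_of_pos_of_le_one_of_nonpos ha₀ ha₁ (by linarith)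
  set c := 4 ^ α * max 1 ((2 : ℝ) ^ β)
  set h : ℝ → ℝ := fun u => u ^ β / (a + u) ^ α
  set g : ℝ → ℝ := fun t => c * ((1 + t) ^ β + h (1 - t))
  have hplus_int := intervalIntegrable_one_add_rpow hβ
  have hminus_int : IntervalIntegrable (fun t => h (1 - t)) volume (-1) 1 := by
    have := (intervalIntegrable_rpow_div_add_rpow (α := α) ha₀ zero_le_two hβ).comp_sub_left 1
    norm_num at this
    exact this.symm
  have hg_int : IntervalIntegrable g volume (-1) 1 := (hplus_int.add hminus_int).const_mul c
  have hminus : ∫ t in (-1 : ℝ)..1, h (1 - t) ≤ (1 / (β + 1) + 1 / κ) * a ^ (-κ) := by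
    rw [intervalIntegral.integral_comp_sub_left h, sub_self, sub_neg_eq_add, one_add_one_eq_two]
    exact intervalIntegral_rpow_div_add_rpow_le ha₀ (ha₁.trans one_le_two) hβ hκ
  calc ∫ t in Ioo (-1 : ℝ) 1, (1 - t ^ 2) ^ β / (1 - 2 * t * r + r ^ 2) ^ α
      ≤ ∫ t in Ioo (-1 : ℝ) 1, g t := by
        refine integral_mono_of_nonneg (ae_restrict_of_forall_mem measurableSet_Ioo fun t ht => ?_)
          ((intervalIntegrable_iff_integrableOn_Ioo_of_le (by norm_num)).1 hg_int)
          (ae_restrict_of_forall_mem measurableSet_Ioo fun t ht =>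
            one_sub_sq_rpow_div_rpow_le (Ioo_subset_Icc_self ht) hr₀ hr₁ (by linarith))
        obtain ⟨ht₀, ht₁⟩ := ht
        exact div_nonneg (rpow_nonneg (by nlinarith) _)
          (rpow_nonneg (by nlinarith [mul_nonneg hr₀ (sub_nonneg.2 ht₁.le)]) _)
    _ = ∫ t in (-1 : ℝ)..1, g t := by
        rw [intervalIntegral.integral_of_le (by norm_num), integral_Ioc_eq_integral_Ioo]
    _ ≤ c * (2 ^ (β + 1) / (β + 1) + (1 / (β + 1) + 1 / κ) * a ^ (-κ)) := by
        rw [intervalIntegral.integral_const_mul, intervalIntegral.integral_add hplus_int hminus_int,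
          integral_one_add_rpow hβ]
        gcongr
    _ ≤ c * (2 ^ (β + 1) / (β + 1) * a ^ (-κ) + (1 / (β + 1) + 1 / κ) * a ^ (-κ)) := by
        gcongr
        exact le_mul_of_one_le_right (div_nonneg (by positivity) (by linarith)) hpow
    _ = _ := by ring

theorem stmt_4_general (d : ℕ) (s p : ℝ) (hd : 2 ≤ d) (hs : 0 < s) (hp : 1 ≤ p) :
    ∃ M : ℝ, ∀ r ∈ Ioo (0 : ℝ) 1,
      (1 - r) ^ (s * p + 1) *
          ((2 * π ^ (((d : ℝ) - 1) / 2) / Real.Gamma (((d : ℝ) - 1) / 2)) *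
            ∫ t in Ioo (-1 : ℝ) 1,
              (1 - t ^ 2) ^ (((d : ℝ) - 3) / 2) /
                (1 - 2 * t * r + r ^ 2) ^ (((d : ℝ) + s * p) / 2)) ≤ M := by
  have hd' : (2 : ℝ) ≤ d := by exact_mod_cast hd
  have hβ : -1 < ((d : ℝ) - 3) / 2 := by linarith
  have hκ : 0 < (s * p + 1) / 2 := by nlinarith
  set S := 2 * π ^ (((d : ℝ) - 1) / 2) / Real.Gamma (((d : ℝ) - 1) / 2)
  have hS : 0 ≤ S := div_nonneg (by positivity) (Gamma_pos_of_pos (by linarith)).le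
  set β := ((d : ℝ) - 3) / 2
  set κ := (s * p + 1) / 2
  set K := 4 ^ (β + 1 + κ) * max 1 (2 ^ β) * (2 ^ (β + 1) / (β + 1) + 1 / (β + 1) + 1 / κ)
  refine ⟨S * K, fun r ⟨hr₀, hr₁⟩ => ?_⟩
  have hscale : (1 - r) ^ (s * p + 1) * ((1 - r) ^ 2) ^ (-κ) = 1 := by
    have h : 0 < 1 - r := by linarith
    rw [← rpow_natCast, ← rpow_mul h.le, ← rpow_add h]
    convert rpow_zero (1 - r) using 2
    push_cast; ring
  rw [show ((d : ℝ) + s * p) / 2 = β + 1 + κ by ring]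
  calc _ ≤ (1 - r) ^ (s * p + 1) * (S * (K * ((1 - r) ^ 2) ^ (-κ))) := by
        gcongr
        exact setIntegral_one_sub_sq_rpow_div_rpow_le hβ hκ hr₀.le hr₁
    _ = S * K := by linear_combination (S * K) * hscale

/-- With `Φ(r) = |S^{d-2}| ∫_{-1}^1 (1-t²)^{(d-3)/2} (1-2tr+r²)^{-(d+sp)/2} dt`
(where `|S^{d-2}| = 2 π^{(d-1)/2} / Γ((d-1)/2)` is the surface measure of the unit
sphere in `ℝ^{d-1}`), the function `r ↦ (1-r)^{sp+1} Φ(r)` is bounded on `(0,1)`. -/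
theorem stmt_4 (d : ℕ) (s p : ℝ) (hd : 2 ≤ d) (hs : 0 < s) (hs1 : s < 1) (hp : 1 ≤ p) :
    ∃ M : ℝ, ∀ r ∈ Ioo (0 : ℝ) 1,
      (1 - r) ^ (s * p + 1) *
          ((2 * π ^ (((d : ℝ) - 1) / 2) / Real.Gamma (((d : ℝ) - 1) / 2)) *
            ∫ t in Ioo (-1 : ℝ) 1,
              (1 - t ^ 2) ^ (((d : ℝ) - 3) / 2) /
                (1 - 2 * t * r + r ^ 2) ^ (((d : ℝ) + s * p) / 2)) ≤ M :=
  stmt_4_general d s p hd hs hp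
end

section
/- Let d ≥ 1, s ∈ (0,1), p ≥ 1, α, β, α+β ∈ (-1, sp), and 1+α+β ≠ sp. Then the integral D := (π^{(d-1)/2}·Γ((1+sp)/2)/Γ((d+sp)/2)) · ∫₀¹ (t^α + t^β)·|1 - t^{-(1+α+β-sp)/p}|^p / (1-t)^{1+sp} dt is finite and strictly positive. -/
open Real Set MeasureTheory

/-!
With `e = -(1 + α + β - sp)/p`, the integrand is the sum of the two kernels
`t ^ a * |1 - t ^ e| ^ p / (1 - t) ^ (1 + sp)` for `a = α, β`. Near `0` such a kernel is dominated
by `t ^ a + t ^ (a + e p)`, and `a + e p` is `sp - 1 - β` or `sp - 1 - α`, both `> -1`. Near `1`,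
`t ↦ t ^ e` is Lipschitz, so `|1 - t ^ e| ≤ K (1 - t)` and the kernel is dominated by
`(1 - t) ^ (p - 1 - sp)`, integrable because `s < 1`. Since `1 + α + β ≠ sp`, `e ≠ 0`, so the
integrand is positive on `(0, 1)`.
-/

lemma abs_one_sub_rpow_le_one_add_rpow {x p : ℝ} (hx : 0 ≤ x) (hp : 0 ≤ p) :
    |1 - x| ^ p ≤ 1 + x ^ p := by
  rcases le_total x 1 with h | h
  · calc |1 - x| ^ p ≤ 1 ^ p := by
          refine rpow_le_rpow (abs_nonneg _) ?_ hp
          rw [abs_of_nonneg (by linarith)]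
          linarith
      _ ≤ 1 + x ^ p := by rw [one_rpow]; linarith [rpow_nonneg hx p]
  · calc |1 - x| ^ p ≤ x ^ p := by
          refine rpow_le_rpow (abs_nonneg _) ?_ hp
          rw [abs_of_nonpos (by linarith)]
          linarith
      _ ≤ 1 + x ^ p := by linarith

lemma integrableOn_rpow_mul_abs_one_sub_rpow_rpow {a e p : ℝ} (ha : -1 < a)
    (hae : -1 < a + e * p) (hp : 0 ≤ p) :
    IntegrableOn (fun t : ℝ => t ^ a * |1 - t ^ e| ^ p) (Ioo 0 1) := by
  have hdom : IntegrableOn (fun t : ℝ => t ^ a + t ^ (a + e * p)) (Ioo 0 1) :=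
    ((intervalIntegral.integrableOn_Ioo_rpow_iff one_pos).2 ha).add
      ((intervalIntegral.integrableOn_Ioo_rpow_iff one_pos).2 hae)
  refine hdom.mono' (by fun_prop) ?_
  filter_upwards [ae_restrict_mem measurableSet_Ioo] with t ⟨ht0, _⟩
  rw [norm_eq_abs, abs_of_nonneg (by positivity)]
  calc t ^ a * |1 - t ^ e| ^ p ≤ t ^ a * (1 + t ^ (e * p)) := by
        rw [rpow_mul ht0.le]
        gcongr
        exact abs_one_sub_rpow_le_one_add_rpow (rpow_nonneg ht0.le e) hp
    _ = t ^ a + t ^ (a + e * p) := by rw [rpow_add ht0]; ring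

lemma exists_abs_rpow_sub_one_le {c : ℝ} (hc : 0 < c) (e : ℝ) :
    ∃ K : NNReal, ∀ t ∈ Icc c 1, |t ^ e - 1| ≤ K * (1 - t) := by
  have hloc : LocallyLipschitzOn (Icc c 1) (fun t : ℝ => t ^ e) := fun x hx => by
    obtain ⟨K, s, hs, hK⟩ :=
      (contDiffAt_rpow_const_of_ne (n := 1) (p := e) (hc.trans_le hx.1).ne').exists_lipschitzOnWith
    exact ⟨K, s, nhdsWithin_le_nhds hs, hK⟩
  obtain ⟨K, hK⟩ := hloc.exists_lipschitzOnWith_of_compact isCompact_Icc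
  refine ⟨K, fun t ht => ?_⟩
  have h := hK.dist_le_mul t ht 1 ⟨ht.1.trans ht.2, le_rfl⟩
  rwa [dist_eq, dist_eq, one_rpow, abs_sub_comm t, abs_of_nonneg (sub_nonneg.2 ht.2)] at h

lemma integrableOn_Ioo_one_sub_rpow (c : ℝ) {q : ℝ} (hq : -1 < q) :
    IntegrableOn (fun t : ℝ => (1 - t) ^ q) (Ioo c 1) := by
  have h :=
    ((intervalIntegral.intervalIntegrable_rpow' (a := 0) (b := 1 - c) hq).comp_sub_left 1).symm
  simp only [sub_zero, sub_sub_cancel] at h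
  exact h.def'.mono_set (Ioo_subset_Ioc_self.trans Ioc_subset_uIoc)

lemma integrableOn_abs_one_sub_rpow_rpow_div {c e p σ : ℝ} (hc : 0 < c) (hp : 0 ≤ p)
    (hσ : σ < p) :
    IntegrableOn (fun t : ℝ => |1 - t ^ e| ^ p / (1 - t) ^ (1 + σ)) (Ioo c 1) := by
  obtain ⟨K, hK⟩ := exists_abs_rpow_sub_one_le hc e
  refine ((integrableOn_Ioo_one_sub_rpow c (q := p - (1 + σ)) (by linarith)).const_mul
    ((K : ℝ) ^ p)).mono' (Measurable.aestronglyMeasurable (by fun_prop)) ?_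
  filter_upwards [ae_restrict_mem measurableSet_Ioo] with t ht
  have h1t : 0 < 1 - t := sub_pos.2 ht.2
  rw [norm_eq_abs, abs_of_nonneg (by positivity), rpow_sub h1t, ← mul_div_assoc,
    ← mul_rpow K.coe_nonneg h1t.le, abs_sub_comm]
  gcongr
  exact hK t (Ioo_subset_Icc_self ht)

lemma integrableOn_rpow_mul_abs_one_sub_rpow_rpow_div {a e p σ : ℝ} (ha : -1 < a)
    (hae : -1 < a + e * p) (hp : 0 ≤ p) (hσ : σ < p) :
    IntegrableOn (fun t : ℝ => t ^ a * |1 - t ^ e| ^ p / (1 - t) ^ (1 + σ)) (Ioo 0 1) := by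
  have hleft : IntegrableOn (fun t : ℝ => t ^ a * |1 - t ^ e| ^ p / (1 - t) ^ (1 + σ))
      (Ioc 0 (1 / 2)) := by
    simp only [div_eq_mul_inv]
    refine ((integrableOn_rpow_mul_abs_one_sub_rpow_rpow ha hae hp).mono_set
      (Ioc_subset_Ioo_right (by norm_num))).mul_continuousOn_of_subset ?_ measurableSet_Ioc
      isCompact_Icc Ioc_subset_Icc_self
    have hbase : ∀ t ∈ Icc (0 : ℝ) (1 / 2), 0 < 1 - t := fun t ht => by linarith [ht.2]
    exact ((continuousOn_const.sub (continuousOn_id' _)).rpow_const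
      fun t ht => Or.inl (hbase t ht).ne').inv₀ fun t ht => (rpow_pos_of_pos (hbase t ht) _).ne'
  have hright : IntegrableOn (fun t : ℝ => t ^ a * |1 - t ^ e| ^ p / (1 - t) ^ (1 + σ))
      (Ioo (1 / 2) 1) := by
    simp only [mul_div_assoc]
    exact (integrableOn_abs_one_sub_rpow_rpow_div (by norm_num) hp hσ).continuousOn_mul_of_subset
      ((continuousOn_id' _).rpow_const fun t ht => Or.inl (by linarith [ht.1]))
      isCompact_Icc measurableSet_Ioo Ioo_subset_Icc_self
  exact (hleft.union hright).mono_set fun t ht => by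
    rcases le_or_gt t (1 / 2) with h | h
    exacts [Or.inl ⟨ht.1, h⟩, Or.inr ⟨h, ht.2⟩]

lemma rpow_ne_one_of_mem_Ioo {t e : ℝ} (ht : t ∈ Ioo 0 1) (he : e ≠ 0) : t ^ e ≠ 1 :=
  fun h => he ((rpow_right_inj ht.1 ht.2.ne).1 (h.trans (rpow_zero t).symm))

lemma rpow_add_rpow_mul_abs_one_sub_rpow_div_pos {t a b e p σ : ℝ} (ht : t ∈ Ioo 0 1)
    (he : e ≠ 0) : 0 < (t ^ a + t ^ b) * |1 - t ^ e| ^ p / (1 - t) ^ (1 + σ) := by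
  have hdiff : 0 < |1 - t ^ e| := abs_pos.2 (sub_ne_zero.2 (rpow_ne_one_of_mem_Ioo ht he).symm)
  have ht0 := ht.1
  exact div_pos (mul_pos (by positivity) (rpow_pos_of_pos hdiff p))
    (rpow_pos_of_pos (sub_pos.2 ht.2) _)

theorem stmt_7_general (d : ℕ) (s p α β : ℝ) (hs : 0 < s) (hs1 : s < 1) (hp : 1 ≤ p)
    (hα : α ∈ Ioo (-1 : ℝ) (s * p)) (hβ : β ∈ Ioo (-1 : ℝ) (s * p))
    (hne : 1 + α + β ≠ s * p) :
    IntegrableOn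
      (fun t : ℝ =>
        (t ^ α + t ^ β) * |1 - t ^ (-((1 + α + β - s * p) / p))| ^ p / (1 - t) ^ (1 + s * p))
      (Ioo 0 1) ∧
    0 < π ^ (((d : ℝ) - 1) / 2) * Real.Gamma ((1 + s * p) / 2) /
          Real.Gamma (((d : ℝ) + s * p) / 2) *
        ∫ t in Ioo (0 : ℝ) 1,
          (t ^ α + t ^ β) * |1 - t ^ (-((1 + α + β - s * p) / p))| ^ p /
            (1 - t) ^ (1 + s * p) := by
  set e := -((1 + α + β - s * p) / p) with he_def
  have hp0 : 0 < p := by linarith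
  have hep : e * p = s * p - 1 - α - β := by rw [he_def]; field_simp; ring
  have he : e ≠ 0 := by
    intro h
    rw [h, zero_mul] at hep
    exact hne (by linarith)
  have hsp_lt : s * p < p := by nlinarith
  have hint : IntegrableOn
      (fun t : ℝ => (t ^ α + t ^ β) * |1 - t ^ e| ^ p / (1 - t) ^ (1 + s * p)) (Ioo 0 1) := by
    simp only [add_mul, add_div]
    exact (integrableOn_rpow_mul_abs_one_sub_rpow_rpow_div hα.1 (by linarith [hβ.2]) hp0.le
      hsp_lt).add
      (integrableOn_rpow_mul_abs_one_sub_rpow_rpow_div hβ.1 (by linarith [hα.2]) hp0.le hsp_lt)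
  have hintegral := intervalIntegral.intervalIntegral_pos_of_pos_on
    ((intervalIntegrable_iff_integrableOn_Ioo_of_le zero_le_one).2 hint)
    (fun t ht => rpow_add_rpow_mul_abs_one_sub_rpow_div_pos ht he) zero_lt_one
  rw [intervalIntegral.integral_of_le zero_le_one, integral_Ioc_eq_integral_Ioo] at hintegral
  have hsp : 0 < s * p := mul_pos hs hp0
  exact ⟨hint, mul_pos (by positivity) hintegral⟩

/-- The sharp constant `D` of the weighted fractional Hardy inequality on the half-space,
`D = (π^{(d-1)/2} Γ((1+sp)/2)/Γ((d+sp)/2)) ∫₀¹ (t^α+t^β)|1-t^{-(1+α+β-sp)/p}|^p (1-t)^{-1-sp} dt`,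
is finite (the integral converges) and strictly positive. -/
theorem stmt_7 (d : ℕ) (s p α β : ℝ) (hd : 1 ≤ d) (hs : 0 < s) (hs1 : s < 1) (hp : 1 ≤ p)
    (hα : α ∈ Ioo (-1 : ℝ) (s * p)) (hβ : β ∈ Ioo (-1 : ℝ) (s * p))
    (hαβ : α + β ∈ Ioo (-1 : ℝ) (s * p)) (hne : 1 + α + β ≠ s * p) :
    IntegrableOn
      (fun t : ℝ =>
        (t ^ α + t ^ β) * |1 - t ^ (-((1 + α + β - s * p) / p))| ^ p / (1 - t) ^ (1 + s * p))
      (Ioo 0 1) ∧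
    0 < π ^ (((d : ℝ) - 1) / 2) * Real.Gamma ((1 + s * p) / 2) /
          Real.Gamma (((d : ℝ) + s * p) / 2) *
        ∫ t in Ioo (0 : ℝ) 1,
          (t ^ α + t ^ β) * |1 - t ^ (-((1 + α + β - s * p) / p))| ^ p /
            (1 - t) ^ (1 + s * p) :=
  stmt_7_general d s p α β hs hs1 hp hα hβ hne
end

section
/- Let 0 < s < 1, p ≥ 1, α, β, α+β ∈ (-sp, d). Then the integral C := ∫₀¹ r^{sp-1}·(r^α + r^β)·|1 - r^{(d-α-β-sp)/p}|^p · Φ_{d,s,p}(r) dr is finite, where Φ_{d,s,p}(r) = (1-r)^{-1-sp} + (1+r)^{-1-sp} when d = 1. Moreover C > 0 if additionally sp+α+β ≠ d. -/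
/-!
Let `γ = (1 - α - β - sp)/p`. Near `r = 1` the factor `|1 - r^γ|^p` vanishes like `(1 - r)^p`,
which turns the singularity `(1 - r)^{-1-sp}` of `Φ` into `(1 - r)^{p(1-s)-1}`, integrable because
`s < 1`. Near `r = 0` it is at most a constant times `r^{min(γp, 0)}`; as `γp = 1 - α - β - sp`,
the integrand is then bounded by `r^{min(sp-1+α, -β)} + r^{min(sp-1+β, -α)}`, integrable because
`α, β ∈ (-sp, 1)`. So the integrand is dominated by Beta integrands `r^a (1 - r)^b` with
`a, b > -1`. If `sp + α + β ≠ 1` then `γ ≠ 0`, and the integrand is strictly positive on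
`(0, 1)`.
-/

open Real Set MeasureTheory

/-- The kernel `Φ_{1,s,p}` of the paper, with `q = sp`. -/
noncomputable def phi (q r : ℝ) : ℝ := (1 - r) ^ (-1 - q) + (1 + r) ^ (-1 - q)

theorem integrableOn_rpow_mul_one_sub_rpow {a b : ℝ} (ha : -1 < a) (hb : -1 < b) :
    IntegrableOn (fun r : ℝ => r ^ a * (1 - r) ^ b) (Ioo 0 1) := by
  have hu : 0 < (↑(a + 1) : ℂ).re := by simp; linarith
  have hv : 0 < (↑(b + 1) : ℂ).re := by simp; linarith
  have h := Complex.betaIntegral_convergent hu hv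
  rw [intervalIntegrable_iff_integrableOn_Ioo_of_le zero_le_one] at h
  refine IntegrableOn.congr_fun h.norm (fun r hr => ?_) measurableSet_Ioo
  have hr1 : (0 : ℝ) < 1 - r := by linarith [hr.2]
  rw [norm_mul, show (1 : ℂ) - r = ((1 - r : ℝ) : ℂ) by push_cast; ring,
    Complex.norm_cpow_eq_rpow_re_of_pos hr.1, Complex.norm_cpow_eq_rpow_re_of_pos hr1]
  norm_num

theorem one_sub_rpow_le_mul_one_sub {r γ : ℝ} (hr0 : 0 < r) (hr1 : r ≤ 1) :
    1 - r ^ γ ≤ max γ 1 * (1 - r) := by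
  rcases le_total γ 1 with h | h
  · have : r ≤ r ^ γ := by simpa using rpow_le_rpow_of_exponent_ge hr0 hr1 h
    nlinarith [le_max_right γ 1]
  · -- Bernoulli's inequality at `1 + (r - 1)`
    have := one_add_mul_self_le_rpow_one_add (s := r - 1) (by linarith) h
    rw [add_sub_cancel] at this
    nlinarith [le_max_left γ 1]

theorem abs_one_sub_rpow_le {r γ : ℝ} (hr0 : 0 < r) (hr1 : r ≤ 1) :
    |1 - r ^ γ| ≤ max |γ| 1 * r ^ min γ 0 * (1 - r) := by
  rcases le_or_gt 0 γ with hγ | hγ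
  · have hle : r ^ γ ≤ 1 := rpow_le_one hr0.le hr1 hγ
    rw [min_eq_right hγ, rpow_zero, mul_one, abs_of_nonneg (by linarith), abs_of_nonneg hγ]
    exact one_sub_rpow_le_mul_one_sub hr0 hr1
  · have hle : 1 - r ^ (-γ) ≤ max |γ| 1 * (1 - r) := by
      simpa [abs_of_neg hγ] using one_sub_rpow_le_mul_one_sub (γ := -γ) hr0 hr1
    have hfac : r ^ γ - 1 = r ^ γ * (1 - r ^ (-γ)) := by
      rw [mul_sub, mul_one, ← rpow_add hr0, add_neg_cancel, rpow_zero]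
    have hone : 1 ≤ r ^ γ := one_le_rpow_of_pos_of_le_one_of_nonpos hr0 hr1 hγ.le
    rw [min_eq_left hγ.le, abs_sub_comm, abs_of_nonneg (by linarith), hfac]
    nlinarith [mul_le_mul_of_nonneg_left hle (rpow_nonneg hr0.le γ)]

theorem abs_one_sub_rpow_pos {r γ : ℝ} (hr0 : 0 < r) (hr1 : r < 1) (hγ : γ ≠ 0) :
    0 < |1 - r ^ γ| := by
  refine abs_pos.2 (sub_ne_zero.2 fun h => hγ ?_)
  rwa [← rpow_zero r, rpow_right_inj hr0 hr1.ne, eq_comm] at h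

theorem one_sub_rpow_mul_phi_le {r p q : ℝ} (hr0 : 0 ≤ r) (hr1 : r < 1) (hp : 0 ≤ p)
    (hq : -1 ≤ q) : (1 - r) ^ p * phi q r ≤ (1 - r) ^ (p - 1 - q) + 1 := by
  have h1r : 0 < 1 - r := by linarith
  have hleft : (1 - r) ^ p ≤ 1 := rpow_le_one h1r.le (by linarith) hp
  have hright : (1 + r) ^ (-1 - q) ≤ 1 :=
    rpow_le_one_of_one_le_of_nonpos (by linarith) (by linarith)
  rw [phi, mul_add, ← rpow_add h1r, show p + (-1 - q) = p - 1 - q by ring]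
  nlinarith [rpow_nonneg h1r.le p, rpow_nonneg (by linarith : (0 : ℝ) ≤ 1 + r) (-1 - q)]

theorem integrableOn_rpow_mul_abs_one_sub_rpow_mul_phi {a γ p q : ℝ} (hp : 0 < p)
    (hq : -1 ≤ q) (hqp : q < p) (ha : -1 < a + min (γ * p) 0) :
    IntegrableOn (fun r => r ^ a * |1 - r ^ γ| ^ p * phi q r) (Ioo 0 1) := by
  set c := a + min (γ * p) 0
  set M := max |γ| 1 ^ p
  have hmeas : AEStronglyMeasurable (fun r => r ^ a * |1 - r ^ γ| ^ p * phi q r)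
      (volume.restrict (Ioo 0 1)) := by
    refine ContinuousOn.aestronglyMeasurable (fun r hr => ContinuousAt.continuousWithinAt ?_)
      measurableSet_Ioo
    have : 0 < 1 - r := by linarith [hr.2]
    unfold phi
    fun_prop (disch := first | exact Or.inr hp.le | exact Or.inl (by linarith [hr.1]))
  have hdom : IntegrableOn
      (fun r => M * (r ^ c * (1 - r) ^ (p - 1 - q) + r ^ c * (1 - r) ^ (0 : ℝ))) (Ioo 0 1) :=
    ((integrableOn_rpow_mul_one_sub_rpow ha (by linarith)).add
      (integrableOn_rpow_mul_one_sub_rpow ha (by norm_num))).const_mul M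
  refine hdom.mono' hmeas ((ae_restrict_mem measurableSet_Ioo).mono fun r ⟨hr0, hr1⟩ => ?_)
  have h1r : 0 < 1 - r := by linarith
  have hpow : |1 - r ^ γ| ^ p ≤ M * r ^ min (γ * p) 0 * (1 - r) ^ p := by
    calc |1 - r ^ γ| ^ p ≤ (max |γ| 1 * r ^ min γ 0 * (1 - r)) ^ p :=
          rpow_le_rpow (abs_nonneg _) (abs_one_sub_rpow_le hr0 hr1.le) hp.le
      _ = M * r ^ min (γ * p) 0 * (1 - r) ^ p := by
          rw [mul_rpow (by positivity) h1r.le, mul_rpow (by positivity) (by positivity),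
            ← rpow_mul hr0.le, min_mul_of_nonneg _ _ hp.le, zero_mul]
  have hphi := one_sub_rpow_mul_phi_le hr0.le hr1 hp.le hq
  have hphi0 : 0 ≤ phi q r := by unfold phi; positivity
  rw [norm_of_nonneg (by positivity), rpow_zero, mul_one, rpow_add hr0]
  calc r ^ a * |1 - r ^ γ| ^ p * phi q r
      ≤ r ^ a * (M * r ^ min (γ * p) 0 * (1 - r) ^ p) * phi q r := by gcongr
    _ = M * (r ^ a * r ^ min (γ * p) 0) * ((1 - r) ^ p * phi q r) := by ring
    _ ≤ M * (r ^ a * r ^ min (γ * p) 0) * ((1 - r) ^ (p - 1 - q) + 1) := by gcongr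
    _ = _ := by ring

theorem stmt_8_general (s p α β : ℝ) (hs : 0 < s) (hs1 : s < 1) (hp : 1 ≤ p)
    (hα : α ∈ Ioo (-(s * p)) (1 : ℝ)) (hβ : β ∈ Ioo (-(s * p)) (1 : ℝ)) :
    IntegrableOn
      (fun r : ℝ =>
        r ^ (s * p - 1) * (r ^ α + r ^ β) * |1 - r ^ ((1 - α - β - s * p) / p)| ^ p *
          ((1 - r) ^ (-1 - s * p) + (1 + r) ^ (-1 - s * p)))
      (Ioo 0 1) ∧
    (s * p + α + β ≠ 1 →
      0 < ∫ r in Ioo (0 : ℝ) 1,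
        r ^ (s * p - 1) * (r ^ α + r ^ β) * |1 - r ^ ((1 - α - β - s * p) / p)| ^ p *
          ((1 - r) ^ (-1 - s * p) + (1 + r) ^ (-1 - s * p))) := by
  have hp0 : 0 < p := by linarith
  set γ := (1 - α - β - s * p) / p
  have hγp : γ * p = 1 - α - β - s * p := div_mul_cancel₀ _ hp0.ne'
  have hexp : ∀ a b, -(s * p) < a → b < 1 →
      -1 < s * p - 1 + a + min (1 - a - b - s * p) 0 := by
    intro a b ha hb
    rcases min_cases (1 - a - b - s * p) 0 with ⟨h, -⟩ | ⟨h, -⟩ <;> rw [h] <;> linarith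
  have hint : IntegrableOn (fun r : ℝ => r ^ (s * p - 1) * (r ^ α + r ^ β) * |1 - r ^ γ| ^ p *
      phi (s * p) r) (Ioo 0 1) := by
    have hq : s * p < p := by nlinarith
    have hα' := integrableOn_rpow_mul_abs_one_sub_rpow_mul_phi (a := s * p - 1 + α) (γ := γ) hp0
      (by nlinarith) hq (by rw [hγp]; exact hexp α β hα.1 hβ.2)
    have hβ' := integrableOn_rpow_mul_abs_one_sub_rpow_mul_phi (a := s * p - 1 + β) (γ := γ) hp0
      (by nlinarith) hq
      (by rw [hγp, show 1 - α - β = 1 - β - α by ring]; exact hexp β α hβ.1 hα.2)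
    refine (hα'.add hβ').congr_fun (fun r hr => ?_) measurableSet_Ioo
    simp only [Pi.add_apply, rpow_add hr.1]
    ring
  refine ⟨hint, fun hne => ?_⟩
  have hγ0 : γ ≠ 0 := div_ne_zero (by contrapose! hne; linarith) hp0.ne'
  rw [← integral_Ioc_eq_integral_Ioo, ← intervalIntegral.integral_of_le zero_le_one]
  refine intervalIntegral.intervalIntegral_pos_of_pos_on
    ((intervalIntegrable_iff_integrableOn_Ioo_of_le zero_le_one).2 hint)
    (fun r ⟨hr0, hr1⟩ => ?_) zero_lt_one
  have := abs_one_sub_rpow_pos hr0 hr1 hγ0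
  have : 0 < 1 - r := by linarith
  positivity

/-- For `d = 1`, the constant
`C = ∫₀¹ r^{sp-1}(r^α+r^β)|1-r^{(1-α-β-sp)/p}|^p Φ_{1,s,p}(r) dr` with
`Φ_{1,s,p}(r) = (1-r)^{-1-sp} + (1+r)^{-1-sp}` is finite, and positive if
`sp + α + β ≠ 1`. -/
theorem stmt_8 (s p α β : ℝ) (hs : 0 < s) (hs1 : s < 1) (hp : 1 ≤ p)
    (hα : α ∈ Ioo (-(s * p)) (1 : ℝ)) (hβ : β ∈ Ioo (-(s * p)) (1 : ℝ))
    (hαβ : α + β ∈ Ioo (-(s * p)) (1 : ℝ)) :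
    IntegrableOn
      (fun r : ℝ =>
        r ^ (s * p - 1) * (r ^ α + r ^ β) * |1 - r ^ ((1 - α - β - s * p) / p)| ^ p *
          ((1 - r) ^ (-1 - s * p) + (1 + r) ^ (-1 - s * p)))
      (Ioo 0 1) ∧
    (s * p + α + β ≠ 1 →
      0 < ∫ r in Ioo (0 : ℝ) 1,
        r ^ (s * p - 1) * (r ^ α + r ^ β) * |1 - r ^ ((1 - α - β - s * p) / p)| ^ p *
          ((1 - r) ^ (-1 - s * p) + (1 + r) ^ (-1 - s * p))) :=
  stmt_8_general s p α β hs hs1 hp hα hβ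
end
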